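/- arXiv:2408.13382 — 2 statements merged into one kernel-verified Lean document; each statement's English description precedes it below -/
import Mathlib

section
/- For last-passage increments with respect to the initial point, whenever x + e1 + e2 ≤ y, one has I_{x,y} = w_x + (I_{x+e2,y} − J_{x+e1,y})^+ and J_{x,y} = w_x + (J_{x+e1,y} − I_{x+e2,y})^+, where I_{x,y} = L_{x,y} − L_{x+e1,y} and J_{x,y} = L_{x,y} − L_{x+e2,y}. -/
open scoped BigOperators

/-- An up-right path of length `n` in `ℤ²`: each step is `e1 = (1,0)` or `e2 = (0,1)`. -/
def IsUpRight (n : ℕ) (π : ℕ → ℤ × ℤ) : Prop :=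
  ∀ i < n, π (i + 1) = π i + (1, 0) ∨ π (i + 1) = π i + (0, 1)

/-- The last-passage time `L_{x,y}(w)`: the supremum (a maximum over the finitely many
up-right paths from `x` to `y`, including both endpoints) of the path weight sums,
with value `⊥ = -∞` when `x ≤ y` fails (empty set of paths). -/
noncomputable def lpp (w : ℤ × ℤ → ℝ) (x y : ℤ × ℤ) : EReal :=
  sSup {s : EReal | ∃ n : ℕ, ∃ π : ℕ → ℤ × ℤ,
    π 0 = x ∧ π n = y ∧ IsUpRight n π ∧
    s = ((∑ i ∈ Finset.range (n + 1), w (π i) : ℝ) : EReal)}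

/-- Increment with respect to the initial point: `I_{x,y} = L_{x,y} - L_{x+e1,y}`. -/
noncomputable def incI (w : ℤ × ℤ → ℝ) (x y : ℤ × ℤ) : EReal :=
  lpp w x y - lpp w (x + (1, 0)) y

/-- Increment with respect to the initial point: `J_{x,y} = L_{x,y} - L_{x+e2,y}`. -/
noncomputable def incJ (w : ℤ × ℤ → ℝ) (x y : ℤ × ℤ) : EReal :=
  lpp w x y - lpp w (x + (0, 1)) y

/-- Increment with respect to the terminal point: `Î_{x,y} = L_{x,y} - L_{x,y-e1}`. -/
noncomputable def incIhat (w : ℤ × ℤ → ℝ) (x y : ℤ × ℤ) : EReal :=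
  lpp w x y - lpp w x (y - (1, 0))

/-- Increment with respect to the terminal point: `Ĵ_{x,y} = L_{x,y} - L_{x,y-e2}`. -/
noncomputable def incJhat (w : ℤ × ℤ → ℝ) (x y : ℤ × ℤ) : EReal :=
  lpp w x y - lpp w x (y - (0, 1))

namespace LPPaux

def T (w : ℤ × ℤ → ℝ) (x y : ℤ × ℤ) : Set ℝ :=
  {s : ℝ | ∃ n : ℕ, ∃ π : ℕ → ℤ × ℤ,
    π 0 = x ∧ π n = y ∧ IsUpRight n π ∧
    s = ∑ i ∈ Finset.range (n + 1), w (π i)}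

lemma lpp_eq_image (w : ℤ × ℤ → ℝ) (x y : ℤ × ℤ) :
    lpp w x y = sSup ((↑) '' T w x y : Set EReal) := by
  unfold lpp
  congr 1
  ext s
  constructor
  · rintro ⟨n, π, h0, hn, hup, rfl⟩
    exact ⟨_, ⟨n, π, h0, hn, hup, rfl⟩, rfl⟩
  · rintro ⟨r, ⟨n, π, h0, hn, hup, rfl⟩, rfl⟩
    exact ⟨n, π, h0, hn, hup, rfl⟩

lemma step_le {n : ℕ} {π : ℕ → ℤ × ℤ} (hup : IsUpRight n π) {i : ℕ} (hi : i < n) :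
    π i ≤ π (i + 1) := by
  rcases hup i hi with h | h <;> rw [h] <;>
    refine ⟨?_, ?_⟩ <;> simp <;> omega

lemma mono {n : ℕ} {π : ℕ → ℤ × ℤ} (hup : IsUpRight n π) :
    ∀ j ≤ n, ∀ i ≤ j, π i ≤ π j := by
  intro j hj
  induction j with
  | zero => intro i hi; interval_cases i; exact le_rfl
  | succ k ih =>
    intro i hi
    rcases Nat.lt_or_ge i (k+1) with h | h
    · exact le_trans (ih (by omega) i (by omega)) (step_le hup (by omega))
    · have : i = k + 1 := by omega
      subst this; exact le_rfl

lemma sumcoord {n : ℕ} {π : ℕ → ℤ × ℤ} (hup : IsUpRight n π) :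
    ∀ i ≤ n, (π i).1 + (π i).2 = (π 0).1 + (π 0).2 + i := by
  intro i hi
  induction i with
  | zero => simp
  | succ k ih =>
    have hk := ih (by omega)
    rcases hup k (by omega) with h | h <;> rw [h] <;> simp [Prod.fst_add, Prod.snd_add] <;>
      push_cast <;> omega

lemma bddAbove (w : ℤ × ℤ → ℝ) (x y : ℤ × ℤ) : BddAbove (T w x y) := by
  refine ⟨∑ p ∈ Finset.Icc x y, |w p|, ?_⟩
  rintro s ⟨n, π, h0, hn, hup, rfl⟩
  calc ∑ i ∈ Finset.range (n + 1), w (π i)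
      ≤ ∑ i ∈ Finset.range (n + 1), |w (π i)| :=
        Finset.sum_le_sum fun i _ => le_abs_self _
    _ = ∑ p ∈ (Finset.range (n + 1)).image π, |w p| := by
        rw [Finset.sum_image]
        intro i hi j hj hij
        have hi' := sumcoord hup i (by simpa using Nat.lt_succ_iff.mp (Finset.mem_range.mp hi))
        have hj' := sumcoord hup j (by simpa using Nat.lt_succ_iff.mp (Finset.mem_range.mp hj))
        rw [hij] at hi'
        omega
    _ ≤ ∑ p ∈ Finset.Icc x y, |w p| := by
        apply Finset.sum_le_sum_of_subset_of_nonneg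
        · intro p hp
          obtain ⟨i, hi, rfl⟩ := Finset.mem_image.mp hp
          have hi' : i ≤ n := Nat.lt_succ_iff.mp (Finset.mem_range.mp hi)
          rw [Finset.mem_Icc]
          constructor
          · rw [← h0]; exact mono hup i hi' 0 (by omega)
          · rw [← hn]; exact mono hup n le_rfl i hi'
        · intro p _ _; exact abs_nonneg _

lemma nonempty {w : ℤ × ℤ → ℝ} {x y : ℤ × ℤ} (h : x ≤ y) : (T w x y).Nonempty := by
  obtain ⟨h1, h2⟩ := h
  set a : ℤ := y.1 - x.1 with ha
  set n : ℕ := (y.1 - x.1 + (y.2 - x.2)).toNat with hn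
  refine ⟨_, n, fun i => if (i : ℤ) ≤ a then (x.1 + i, x.2) else (x.1 + a, x.2 + i - a),
    ?_, ?_, ?_, rfl⟩
  · simp only []
    rw [if_pos (by simp [ha]; omega)]
    simp
  · simp only []
    by_cases hc : (n : ℤ) ≤ a
    · rw [if_pos hc]
      have : (n : ℤ) = y.1 - x.1 + (y.2 - x.2) := by rw [hn]; omega
      have : (n : ℤ) = a := by simp [ha] at *; omega
      ext <;> simp [this, ha] <;> omega
    · rw [if_neg hc]
      have hnn : (n : ℤ) = y.1 - x.1 + (y.2 - x.2) := by rw [hn]; omega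
      ext <;> simp [ha] <;> omega
  · intro i hi
    have hin : (i : ℤ) + 1 ≤ (n : ℤ) := by exact_mod_cast Nat.succ_le_of_lt hi
    have hnn : (n : ℤ) = y.1 - x.1 + (y.2 - x.2) := by rw [hn]; omega
    simp only []
    by_cases hc : (i : ℤ) + 1 ≤ a
    · left
      rw [if_pos (by push_cast; omega), if_pos (by omega)]
      ext <;> simp <;> push_cast <;> omega
    · right
      rw [if_neg (by push_cast; omega)]
      by_cases hc2 : (i : ℤ) ≤ a
      · have : (i : ℤ) = a := by omega
        rw [if_pos hc2]
        ext <;> simp [this] <;> push_cast <;> omega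
      · rw [if_neg hc2]
        ext <;> simp <;> push_cast <;> omega


lemma recursion (w : ℤ × ℤ → ℝ) (x y : ℤ × ℤ) (hxy : x ≠ y) :
    T w x y = (fun s => w x + s) '' (T w (x + (1, 0)) y ∪ T w (x + (0, 1)) y) := by
  ext s
  constructor
  · rintro ⟨n, π, h0, hn, hup, rfl⟩
    have hn0 : n ≠ 0 := by rintro rfl; exact hxy (h0 ▸ hn ▸ rfl)
    obtain ⟨m, rfl⟩ := Nat.exists_eq_succ_of_ne_zero hn0
    have key : ∑ i ∈ Finset.range (m + 1 + 1), w (π i)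
        = w x + ∑ i ∈ Finset.range (m + 1), w (π (i + 1)) := by
      rw [Finset.sum_range_succ' (fun i => w (π i)) (m + 1), h0, add_comm]
    have hup' : IsUpRight m (fun i => π (i + 1)) := fun i hi => hup (i + 1) (by omega)
    rcases hup 0 (by omega) with h | h
    · refine ⟨∑ i ∈ Finset.range (m + 1), w (π (i + 1)), Or.inl ?_, key.symm⟩
      exact ⟨m, fun i => π (i + 1), by show π (0+1) = _; rw [h, h0], hn, hup', rfl⟩
    · refine ⟨∑ i ∈ Finset.range (m + 1), w (π (i + 1)), Or.inr ?_, key.symm⟩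
      exact ⟨m, fun i => π (i + 1), by show π (0+1) = _; rw [h, h0], hn, hup', rfl⟩
  · rintro ⟨r, hr, rfl⟩
    have : ∀ z : ℤ × ℤ, r ∈ T w z y → z = x + (1, 0) ∨ z = x + (0, 1) →
        w x + r ∈ T w x y := by
      rintro z ⟨m, π, h0, hm, hup, rfl⟩ hz
      refine ⟨m + 1, fun i => Nat.rec x (fun k _ => π k) i, rfl, hm, ?_, ?_⟩
      · intro i hi
        cases i with
        | zero => rcases hz with hz | hz
                  · left; simp [h0, hz]
                  · right; simp [h0, hz]
        | succ k => exact hup k (by omega)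
      · rw [Finset.sum_range_succ' (fun i => w (Nat.rec x (fun k _ => π k) i)) (m + 1)]
        simp [add_comm]
    rcases hr with hr | hr
    · exact this _ hr (Or.inl rfl)
    · exact this _ hr (Or.inr rfl)

lemma sSup_coe_image {A : Set ℝ} (hne : A.Nonempty) (hbdd : BddAbove A) :
    sSup ((↑) '' A : Set EReal) = ((sSup A : ℝ) : EReal) := by
  apply IsLUB.sSup_eq
  constructor
  · rintro _ ⟨a, ha, rfl⟩
    exact_mod_cast le_csSup hbdd ha
  · intro b hb
    induction b with
    | bot =>
      obtain ⟨a, ha⟩ := hne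
      exact absurd (hb ⟨a, ha, rfl⟩) (by simp)
    | coe r =>
      have : ∀ a ∈ A, a ≤ r := fun a ha => by exact_mod_cast hb ⟨a, ha, rfl⟩
      exact_mod_cast csSup_le hne this
    | top => exact le_top

lemma sSup_add_image {A : Set ℝ} (c : ℝ) (hne : A.Nonempty) (hbdd : BddAbove A) :
    sSup ((fun s => c + s) '' A) = c + sSup A := by
  apply IsLUB.csSup_eq _ (hne.image _)
  constructor
  · rintro _ ⟨a, ha, rfl⟩
    simpa using add_le_add_left (le_csSup hbdd ha) c
  · intro b hb
    have : ∀ a ∈ A, a ≤ b - c := fun a ha => by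
      have := hb ⟨a, ha, rfl⟩; dsimp at this; linarith
    have := csSup_le hne this; linarith

lemma lpp_eq_coe {w : ℤ × ℤ → ℝ} {x y : ℤ × ℤ} (h : x ≤ y) :
    lpp w x y = ((sSup (T w x y) : ℝ) : EReal) := by
  rw [lpp_eq_image, sSup_coe_image (nonempty h) (bddAbove w x y)]

lemma sSup_rec {w : ℤ × ℤ → ℝ} {x y : ℤ × ℤ} (h1 : x + (1, 0) ≤ y) (h2 : x + (0, 1) ≤ y) :
    sSup (T w x y) = w x + max (sSup (T w (x + (1, 0)) y)) (sSup (T w (x + (0, 1)) y)) := by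
  have hxy : x ≠ y := by
    rintro rfl
    have := h1.1
    simp at this
  rw [recursion w x y hxy,
    sSup_add_image _ ((nonempty h1).inl) ((bddAbove w _ y).union (bddAbove w _ y)),
    csSup_union (bddAbove w _ y) (nonempty h1) (bddAbove w _ y) (nonempty h2)]

end LPPaux

/-- Increment recursion with respect to the initial point: whenever `x + e1 + e2 ≤ y`,
`I_{x,y} = w_x + (I_{x+e2,y} − J_{x+e1,y})⁺` and `J_{x,y} = w_x + (J_{x+e1,y} − I_{x+e2,y})⁺`. -/
theorem stmt1 (w : ℤ × ℤ → ℝ) (x y : ℤ × ℤ) (h : x + (1, 1) ≤ y) :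
    incI w x y = (w x : EReal) + max (incI w (x + (0, 1)) y - incJ w (x + (1, 0)) y) 0 ∧
    incJ w x y = (w x : EReal) + max (incJ w (x + (1, 0)) y - incI w (x + (0, 1)) y) 0 := by
  have he1 : x + (1, 0) ≤ y := le_trans ⟨by simp, by simp⟩ h
  have he2 : x + (0, 1) ≤ y := le_trans ⟨by simp, by simp⟩ h
  have hx : x ≤ y := le_trans ⟨by simp, by simp⟩ h
  have hp1 : x + (0, 1) + (1, 0) = x + (1, 1) := by ext <;> simp
  have hp2 : x + (1, 0) + (0, 1) = x + (1, 1) := by ext <;> simp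
  set L1 : ℝ := sSup (LPPaux.T w (x + (1, 0)) y) with hL1
  set L2 : ℝ := sSup (LPPaux.T w (x + (0, 1)) y) with hL2
  set L12 : ℝ := sSup (LPPaux.T w (x + (1, 1)) y) with hL12
  have e0 : lpp w x y = ((w x + max L1 L2 : ℝ) : EReal) := by
    rw [LPPaux.lpp_eq_coe hx, LPPaux.sSup_rec he1 he2]
  have e1 : lpp w (x + (1, 0)) y = (L1 : EReal) := LPPaux.lpp_eq_coe he1
  have e2 : lpp w (x + (0, 1)) y = (L2 : EReal) := LPPaux.lpp_eq_coe he2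
  have e12 : lpp w (x + (1, 1)) y = (L12 : EReal) := LPPaux.lpp_eq_coe h
  have e12a : lpp w (x + (0, 1) + (1, 0)) y = (L12 : EReal) := by rw [hp1]; exact e12
  have e12b : lpp w (x + (1, 0) + (0, 1)) y = (L12 : EReal) := by rw [hp2]; exact e12
  have hmax : ∀ a b : ℝ, max (a : EReal) (b : EReal) = ((max a b : ℝ) : EReal) := by
    intro a b
    rcases le_total a b with hab | hab
    · rw [max_eq_right hab, max_eq_right (by exact_mod_cast hab)]
    · rw [max_eq_left hab, max_eq_left (by exact_mod_cast hab)]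
  constructor
  · show lpp w x y - lpp w (x + (1, 0)) y
      = _ + max (lpp w (x + (0, 1)) y - lpp w (x + (0, 1) + (1, 0)) y
          - (lpp w (x + (1, 0)) y - lpp w (x + (1, 0) + (0, 1)) y)) 0
    rw [e0, e1, e2, e12a, e12b, ← EReal.coe_sub, ← EReal.coe_sub, ← EReal.coe_sub,
      ← EReal.coe_sub, show ((0 : EReal) = ((0 : ℝ) : EReal)) from rfl, hmax,
      ← EReal.coe_add, EReal.coe_eq_coe_iff]
    rcases le_total L1 L2 with hab | hab
    · rw [max_eq_right hab, max_eq_left (show (0:ℝ) ≤ L2 - L12 - (L1 - L12) by linarith)]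
      ring
    · rw [max_eq_left hab, max_eq_right (show L2 - L12 - (L1 - L12) ≤ 0 by linarith)]
      ring
  · show lpp w x y - lpp w (x + (0, 1)) y
      = _ + max (lpp w (x + (1, 0)) y - lpp w (x + (1, 0) + (0, 1)) y
          - (lpp w (x + (0, 1)) y - lpp w (x + (0, 1) + (1, 0)) y)) 0
    rw [e0, e1, e2, e12a, e12b, ← EReal.coe_sub, ← EReal.coe_sub, ← EReal.coe_sub,
      ← EReal.coe_sub, show ((0 : EReal) = ((0 : ℝ) : EReal)) from rfl, hmax,
      ← EReal.coe_add, EReal.coe_eq_coe_iff]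
    rcases le_total L2 L1 with hab | hab
    · rw [max_eq_left hab, max_eq_left (show (0:ℝ) ≤ L1 - L12 - (L2 - L12) by linarith)]
      ring
    · rw [max_eq_right hab, max_eq_right (show L1 - L12 - (L2 - L12) ≤ 0 by linarith)]
      ring
end

section
/- Comparison (path-crossing) lemma for last-passage increments: for x ≤ y in ℤ², (a) if the terminal point moves by e1, then I_{x,y} ≥ I_{x,y+e1} and J_{x,y} ≤ J_{x,y+e1}; (b) if the terminal point moves by e2, then I_{x,y} ≤ I_{x,y+e2} and J_{x,y} ≥ J_{x,y+e2}. -/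
open scoped BigOperators

/-!
Both inequalities of (a) are instances of the crossing inequality
`L(x, y) + L(x', y') ≤ L(x, y') + L(x', y)`, valid whenever every up-right path from `x` to `y`
meets every up-right path from `x'` to `y'`: cut two geodesics at a common point and exchange
their tails. The relevant pairs are `(x → y + e1, x + e1 → y)` and `(x → y, x + e2 → y + e1)`,
which meet by a discrete intermediate value argument along anti-diagonals. When `x + e1 ≰ y`
(resp. `x + e2 ≰ y`) there are no paths from `x + e1` (resp. `x + e2`) and the increments in
question are `+∞`. Part (b) is part (a) for the environment reflected in the diagonal.
-/

namespace IsUpRight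

variable {n : ℕ} {π : ℕ → ℤ × ℤ}

theorem step (h : IsUpRight n π) {i : ℕ} (hi : i < n) :
    (π i).1 ≤ (π (i + 1)).1 ∧ (π i).2 ≤ (π (i + 1)).2 ∧
      (π (i + 1)).1 + (π (i + 1)).2 = (π i).1 + (π i).2 + 1 := by
  rcases h i hi with h' | h' <;> rw [h'] <;> simp <;> ring

theorem mono (h : IsUpRight n π) {i j : ℕ} (hij : i ≤ j) (hj : j ≤ n) : π i ≤ π j := by
  induction j, hij using Nat.le_induction with
  | base => exact le_rfl
  | succ k _ ih =>
    have ⟨h1, h2, _⟩ := h.step hj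
    exact (ih (by omega)).trans ⟨h1, h2⟩

theorem add_level (h : IsUpRight n π) {i : ℕ} (hi : i ≤ n) :
    (π i).1 + (π i).2 = (π 0).1 + (π 0).2 + i := by
  induction i with
  | zero => simp
  | succ k ih =>
    have := (h.step hi).2.2
    push_cast
    omega

theorem take (h : IsUpRight n π) {i : ℕ} (hi : i ≤ n) : IsUpRight i π :=
  fun k hk => h k (by omega)

theorem drop (h : IsUpRight n π) (j : ℕ) : IsUpRight (n - j) (fun k => π (j + k)) :=
  fun k hk => h (j + k) (by omega)

theorem comp_swap (h : IsUpRight n π) : IsUpRight n (Prod.swap ∘ π) := by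
  intro i hi
  rcases h i hi with h' | h' <;> simp [h']

end IsUpRight

theorem exists_isUpRight {x y : ℤ × ℤ} (hxy : x ≤ y) :
    ∃ n π, π 0 = x ∧ π n = y ∧ IsUpRight n π := by
  obtain ⟨a, ha⟩ : ∃ a : ℕ, y.1 = x.1 + a := ⟨(y.1 - x.1).toNat, by have := hxy.1; omega⟩
  obtain ⟨b, hb⟩ : ∃ b : ℕ, y.2 = x.2 + b := ⟨(y.2 - x.2).toNat, by have := hxy.2; omega⟩
  refine ⟨a + b, fun k => (x.1 + min k a, x.2 + (k - a : ℕ)), by simp, ?_, ?_⟩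
  · ext <;> simp <;> omega
  · intro k hk
    rcases lt_or_ge k a with h | h
    · left; ext <;> simp <;> omega
    · right; ext <;> simp <;> omega

def pathWeight (w : ℤ × ℤ → ℝ) (n : ℕ) (π : ℕ → ℤ × ℤ) : ℝ :=
  ∑ i ∈ Finset.range (n + 1), w (π i)

def pathWeights (w : ℤ × ℤ → ℝ) (x y : ℤ × ℤ) : Set EReal :=
  {s | ∃ n π, π 0 = x ∧ π n = y ∧ IsUpRight n π ∧ s = pathWeight w n π}

theorem lpp_eq_sSup_pathWeights (w : ℤ × ℤ → ℝ) (x y : ℤ × ℤ) :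
    lpp w x y = sSup (pathWeights w x y) := rfl

theorem pathWeight_split (w : ℤ × ℤ → ℝ) (π : ℕ → ℤ × ℤ) {n j : ℕ} (hj : j ≤ n) :
    pathWeight w n π =
      pathWeight w j π + pathWeight w (n - j) (fun k => π (j + k)) - w (π j) := by
  simp only [pathWeight]
  rw [show n + 1 = j + (n - j + 1) by omega, Finset.sum_range_add,
    Finset.sum_range_succ (fun k => w (π k)) j]
  ring

/-- Every path from `x` to `y` has `(y.1 + y.2) - (x.1 + x.2) + 1` sites, all in `[x, y]`,
so only finitely many weights occur. -/
theorem pathWeights_finite (w : ℤ × ℤ → ℝ) (x y : ℤ × ℤ) : (pathWeights w x y).Finite := by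
  obtain ⟨N, hN⟩ : ∃ N : ℕ, N = ((y.1 + y.2) - (x.1 + x.2)).toNat := ⟨_, rfl⟩
  have hfin : (Set.univ.pi fun _ : Fin (N + 1) => Set.Icc x y).Finite :=
    Set.Finite.pi fun _ => Set.finite_Icc x y
  refine (hfin.image fun f => ((∑ i, w (f i) : ℝ) : EReal)).subset ?_
  rintro s ⟨n, π, rfl, rfl, hπ, rfl⟩
  obtain rfl : n = N := by have := hπ.add_level le_rfl; omega
  refine ⟨fun i => π i, fun i _ => ⟨hπ.mono (Nat.zero_le _) i.is_le,
    hπ.mono i.is_le le_rfl⟩, ?_⟩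
  rw [pathWeight, ← Fin.sum_univ_eq_sum_range (fun i => w (π i))]

theorem lpp_eq_bot {w : ℤ × ℤ → ℝ} {x y : ℤ × ℤ} (h : ¬ x ≤ y) : lpp w x y = ⊥ := by
  rw [lpp_eq_sSup_pathWeights, sSup_eq_bot]
  rintro _ ⟨n, π, rfl, rfl, hπ, rfl⟩
  exact absurd (hπ.mono (Nat.zero_le n) le_rfl) h

theorem le_lpp {w : ℤ × ℤ → ℝ} {x y : ℤ × ℤ} {n : ℕ} {π : ℕ → ℤ × ℤ}
    (h0 : π 0 = x) (hn : π n = y) (hπ : IsUpRight n π) :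
    (pathWeight w n π : EReal) ≤ lpp w x y :=
  le_sSup ⟨n, π, h0, hn, hπ, rfl⟩

theorem exists_lpp_eq (w : ℤ × ℤ → ℝ) {x y : ℤ × ℤ} (hxy : x ≤ y) :
    ∃ n π, π 0 = x ∧ π n = y ∧ IsUpRight n π ∧ lpp w x y = pathWeight w n π := by
  obtain ⟨n, π, h0, hn, hπ⟩ := exists_isUpRight hxy
  have hne : (pathWeights w x y).Nonempty := ⟨_, n, π, h0, hn, hπ, rfl⟩
  exact hne.csSup_mem (pathWeights_finite w x y)

theorem exists_lpp_eq_coe (w : ℤ × ℤ → ℝ) {x y : ℤ × ℤ} (hxy : x ≤ y) :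
    ∃ r : ℝ, lpp w x y = r :=
  let ⟨_, _, _, _, _, h⟩ := exists_lpp_eq w hxy
  ⟨_, h⟩

theorem lpp_sub_lpp_eq_top (w : ℤ × ℤ → ℝ) {x x' y : ℤ × ℤ} (hxy : x ≤ y) (h : ¬ x' ≤ y) :
    lpp w x y - lpp w x' y = ⊤ := by
  obtain ⟨r, hr⟩ := exists_lpp_eq_coe w hxy
  rw [hr, lpp_eq_bot h, EReal.coe_sub_bot]

def pathAppend (i : ℕ) (π σ : ℕ → ℤ × ℤ) (k : ℕ) : ℤ × ℤ :=
  if k ≤ i then π k else σ (k - i)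

section pathAppend

variable {i : ℕ} {π σ : ℕ → ℤ × ℤ}

theorem pathAppend_of_le {k : ℕ} (hk : k ≤ i) : pathAppend i π σ k = π k :=
  if_pos hk

theorem pathAppend_add (h : π i = σ 0) (k : ℕ) : pathAppend i π σ (i + k) = σ k := by
  rcases Nat.eq_zero_or_pos k with rfl | hk
  · simpa [pathAppend] using h
  · simp [pathAppend, show ¬ i + k ≤ i by omega]

theorem IsUpRight.append {l : ℕ} (hπ : IsUpRight i π) (hσ : IsUpRight l σ) (h : π i = σ 0) :
    IsUpRight (i + l) (pathAppend i π σ) := by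
  intro k hk
  rcases lt_or_ge k i with hki | hki
  · rw [pathAppend_of_le hki.le, pathAppend_of_le hki]
    exact hπ k hki
  · obtain ⟨k, rfl⟩ := Nat.exists_eq_add_of_le hki
    rw [add_assoc, pathAppend_add h, pathAppend_add h]
    exact hσ k (by omega)

theorem pathWeight_append (w : ℤ × ℤ → ℝ) (l : ℕ) (h : π i = σ 0) :
    pathWeight w (i + l) (pathAppend i π σ) = pathWeight w i π + pathWeight w l σ - w (σ 0) := by
  rw [pathWeight_split w _ (Nat.le_add_right i l), Nat.add_sub_cancel_left,
    pathAppend_of_le le_rfl, h]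
  simp only [pathAppend_add h]
  congr 2
  exact Finset.sum_congr rfl fun k hk =>
    congrArg w (pathAppend_of_le (Nat.lt_succ_iff.mp (Finset.mem_range.mp hk)))

end pathAppend

def PathsCross (x y x' y' : ℤ × ℤ) : Prop :=
  ∀ m n π σ, IsUpRight m π → π 0 = x → π m = y → IsUpRight n σ → σ 0 = x' → σ n = y' →
    ∃ i ≤ m, ∃ j ≤ n, π i = σ j

/-- Exchanging the tails of two crossing geodesics at a common point gives a path from `x` to
`y'` and one from `x'` to `y` with the same total weight. -/
theorem lpp_add_lpp_le_of_pathsCross (w : ℤ × ℤ → ℝ) {x y x' y' : ℤ × ℤ}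
    (hcross : PathsCross x y x' y') (hxy : x ≤ y) (hx'y' : x' ≤ y') :
    lpp w x y + lpp w x' y' ≤ lpp w x y' + lpp w x' y := by
  obtain ⟨m, π, hπ0, hπm, hπ, hA⟩ := exists_lpp_eq w hxy
  obtain ⟨n, σ, hσ0, hσn, hσ, hB⟩ := exists_lpp_eq w hx'y'
  obtain ⟨i, hi, j, hj, hij⟩ := hcross m n π σ hπ hπ0 hπm hσ hσ0 hσn
  have hij' : π i = σ (j + 0) := hij
  have hji' : σ j = π (i + 0) := hij.symm
  have h₁ := le_lpp (w := w) (by rw [pathAppend_of_le i.zero_le, hπ0])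
    (by rw [pathAppend_add hij', Nat.add_sub_cancel' hj, hσn])
    ((hπ.take hi).append (hσ.drop j) hij')
  have h₂ := le_lpp (w := w) (by rw [pathAppend_of_le j.zero_le, hσ0])
    (by rw [pathAppend_add hji', Nat.add_sub_cancel' hi, hπm])
    ((hσ.take hj).append (hπ.drop i) hji')
  rw [pathWeight_append w _ hij', add_zero] at h₁
  rw [pathWeight_append w _ hji', add_zero] at h₂
  have hsum : pathWeight w m π + pathWeight w n σ =
      (pathWeight w i π + pathWeight w (n - j) (fun k => σ (j + k)) - w (σ j)) +
        (pathWeight w j σ + pathWeight w (m - i) (fun k => π (i + k)) - w (π i)) := by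
    rw [pathWeight_split w π hi, pathWeight_split w σ hj, hij]
    ring
  rw [hA, hB, ← EReal.coe_add, hsum, EReal.coe_add]
  exact add_le_add h₁ h₂

theorem lpp_sub_lpp_le_of_pathsCross (w : ℤ × ℤ → ℝ) {x y x' y' : ℤ × ℤ}
    (hcross : PathsCross x y x' y') (hxy : x ≤ y) (hx'y' : x' ≤ y') (hx'y : x' ≤ y)
    (hxy' : x ≤ y') : lpp w x y - lpp w x' y ≤ lpp w x y' - lpp w x' y' := by
  have key := lpp_add_lpp_le_of_pathsCross w hcross hxy hx'y'
  obtain ⟨a, ha⟩ := exists_lpp_eq_coe w hxy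
  obtain ⟨b, hb⟩ := exists_lpp_eq_coe w hx'y'
  obtain ⟨c, hc⟩ := exists_lpp_eq_coe w hx'y
  obtain ⟨d, hd⟩ := exists_lpp_eq_coe w hxy'
  rw [ha, hb, hc, hd, ← EReal.coe_add, ← EReal.coe_add, EReal.coe_le_coe_iff] at key
  rw [ha, hb, hc, hd, ← EReal.coe_sub, ← EReal.coe_sub, EReal.coe_le_coe_iff]
  linarith

/-- Along two paths synchronised by anti-diagonal level, the difference of first coordinates
changes by at most one per step, so it cannot change sign without vanishing. -/
theorem IsUpRight.exists_eq_of_fst_le_of_le_fst {m n : ℕ} {π σ : ℕ → ℤ × ℤ}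
    (hπ : IsUpRight m π) (hσ : IsUpRight n σ) {a b K : ℕ} (ha : a + K ≤ m) (hb : b + K ≤ n)
    (hlevel : (π a).1 + (π a).2 = (σ b).1 + (σ b).2) (h0 : (π a).1 ≤ (σ b).1)
    (hK : (σ (b + K)).1 ≤ (π (a + K)).1) : ∃ k ≤ K, π (a + k) = σ (b + k) := by
  induction K generalizing a b with
  | zero =>
    refine ⟨0, le_rfl, Prod.ext ?_ ?_⟩ <;> simp only [add_zero] at hK ⊢ <;> omega
  | succ K ih =>
    by_cases hle : (σ b).1 ≤ (π a).1
    · refine ⟨0, K.succ.zero_le, Prod.ext ?_ ?_⟩ <;> simp only [add_zero] <;> omega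
    · have ⟨_, hπ2, hπ3⟩ := hπ.step (i := a) (by omega)
      have ⟨hσ1, _, hσ3⟩ := hσ.step (i := b) (by omega)
      obtain ⟨k, hk, h⟩ := ih (a := a + 1) (b := b + 1) (by omega) (by omega) (by omega)
        (by omega) (by rwa [add_right_comm a, add_right_comm b])
      exact ⟨k + 1, by omega, by rwa [← add_assoc, ← add_assoc, add_right_comm a,
        add_right_comm b]⟩

theorem pathsCross_add_e1 (x y : ℤ × ℤ) : PathsCross x (y + (1, 0)) (x + (1, 0)) y := by
  intro m n π σ hπ hπ0 hπm hσ hσ0 hσn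
  have hm := hπ.add_level le_rfl
  have hn := hσ.add_level le_rfl
  simp only [hπ0, hπm, hσ0, hσn, Prod.fst_add, Prod.snd_add] at hm hn
  obtain rfl : m = n + 1 + 1 := by omega
  have ⟨_, h1, h2⟩ := hπ.step (i := 0) (by omega)
  have ⟨_, h3, h4⟩ := hπ.step (i := n + 1) (by omega)
  simp only [zero_add, hπ0, hπm, Prod.fst_add, Prod.snd_add] at h1 h2 h3 h4
  have hlevel : (π 1).1 + (π 1).2 = (σ 0).1 + (σ 0).2 := by
    simp only [hσ0, Prod.fst_add, Prod.snd_add]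
    omega
  have h0 : (π 1).1 ≤ (σ 0).1 := by
    simp only [hσ0, Prod.fst_add]
    omega
  have hK : (σ (0 + n)).1 ≤ (π (1 + n)).1 := by
    rw [zero_add, hσn, add_comm 1]
    omega
  obtain ⟨k, hk, h⟩ := hπ.exists_eq_of_fst_le_of_le_fst hσ (by omega) (by omega) hlevel h0 hK
  exact ⟨1 + k, by omega, k, hk, by simpa using h⟩

theorem pathsCross_add_e2_add_e1 (x y : ℤ × ℤ) : PathsCross x y (x + (0, 1)) (y + (1, 0)) := by
  intro m n π σ hπ hπ0 hπm hσ hσ0 hσn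
  have hm := hπ.add_level le_rfl
  have hn := hσ.add_level le_rfl
  have hπ0m := (hπ.mono (Nat.zero_le m) le_rfl).1
  have hσ0n := (hσ.mono (Nat.zero_le n) le_rfl).2
  simp only [hπ0, hπm, hσ0, hσn, Prod.fst_add, Prod.snd_add] at hm hn hπ0m hσ0n
  obtain rfl : m = n := by omega
  obtain ⟨l, rfl⟩ : ∃ l, m = l + 1 := ⟨m - 1, by omega⟩
  have ⟨h1, _, h2⟩ := hπ.step (i := 0) (by omega)
  have ⟨_, h3, h4⟩ := hσ.step (i := l) (by omega)
  simp only [zero_add, hπ0, hσn, Prod.fst_add, Prod.snd_add] at h1 h2 h3 h4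
  have hlevel : (σ 0).1 + (σ 0).2 = (π 1).1 + (π 1).2 := by
    simp only [hσ0, Prod.fst_add, Prod.snd_add]
    omega
  have h0 : (σ 0).1 ≤ (π 1).1 := by
    simp only [hσ0, Prod.fst_add]
    omega
  have hK : (π (1 + l)).1 ≤ (σ (0 + l)).1 := by
    rw [zero_add, add_comm 1, hπm]
    omega
  obtain ⟨k, hk, h⟩ := hσ.exists_eq_of_fst_le_of_le_fst hπ (by omega) (by omega) hlevel h0 hK
  exact ⟨1 + k, by omega, k, by omega, by simpa using h.symm⟩

section Comparison

variable (w : ℤ × ℤ → ℝ) {x y : ℤ × ℤ}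

theorem incI_add_e1_le (hxy : x ≤ y) : incI w x (y + (1, 0)) ≤ incI w x y := by
  have hy : y ≤ y + (1, 0) := le_add_of_nonneg_right (by simp [Prod.le_def])
  by_cases h : x + (1, 0) ≤ y
  · exact lpp_sub_lpp_le_of_pathsCross w (pathsCross_add_e1 x y) (hxy.trans hy) h
      (h.trans hy) hxy
  · rw [show incI w x y = ⊤ from lpp_sub_lpp_eq_top w hxy h]
    exact le_top

theorem incJ_le_incJ_add_e1 (hxy : x ≤ y) : incJ w x y ≤ incJ w x (y + (1, 0)) := by
  have hy : y ≤ y + (1, 0) := le_add_of_nonneg_right (by simp [Prod.le_def])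
  by_cases h : x + (0, 1) ≤ y
  · exact lpp_sub_lpp_le_of_pathsCross w (pathsCross_add_e2_add_e1 x y) hxy (h.trans hy) h
      (hxy.trans hy)
  · have h' : ¬ x + (0, 1) ≤ y + (1, 0) := by
      have := hxy.1
      simp only [Prod.le_def, Prod.fst_add, Prod.snd_add] at h ⊢
      omega
    rw [incJ, incJ, lpp_sub_lpp_eq_top w hxy h, lpp_sub_lpp_eq_top w (hxy.trans hy) h']

end Comparison

theorem lpp_le_lpp_comp_swap (w : ℤ × ℤ → ℝ) (x y : ℤ × ℤ) :
    lpp w x y ≤ lpp (w ∘ Prod.swap) x.swap y.swap := by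
  refine sSup_le_sSup ?_
  rintro _ ⟨n, π, rfl, rfl, hπ, rfl⟩
  exact ⟨n, Prod.swap ∘ π, rfl, rfl, hπ.comp_swap, by simp⟩

theorem lpp_comp_swap (w : ℤ × ℤ → ℝ) (x y : ℤ × ℤ) :
    lpp (w ∘ Prod.swap) x.swap y.swap = lpp w x y :=
  le_antisymm
    (by simpa [Function.comp_assoc] using lpp_le_lpp_comp_swap (w ∘ Prod.swap) x.swap y.swap)
    (lpp_le_lpp_comp_swap w x y)

theorem incI_comp_swap (w : ℤ × ℤ → ℝ) (x y : ℤ × ℤ) :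
    incI (w ∘ Prod.swap) x.swap y.swap = incJ w x y := by
  rw [incI, incJ, ← lpp_comp_swap w x y, ← lpp_comp_swap w (x + (0, 1)) y]
  rfl

theorem incJ_comp_swap (w : ℤ × ℤ → ℝ) (x y : ℤ × ℤ) :
    incJ (w ∘ Prod.swap) x.swap y.swap = incI w x y := by
  rw [incI, incJ, ← lpp_comp_swap w x y, ← lpp_comp_swap w (x + (1, 0)) y]
  rfl

/-- Comparison (path-crossing) lemma for increments with respect to the initial point:
for `x ≤ y`, moving the terminal point by `e1` decreases `I` and increases `J`, and
moving it by `e2` increases `I` and decreases `J` (inequalities in the extended reals). -/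
theorem stmt4 (w : ℤ × ℤ → ℝ) (x y : ℤ × ℤ) (hxy : x ≤ y) :
    (incI w x (y + (1, 0)) ≤ incI w x y ∧ incJ w x y ≤ incJ w x (y + (1, 0))) ∧
    (incI w x y ≤ incI w x (y + (0, 1)) ∧ incJ w x (y + (0, 1)) ≤ incJ w x y) := by
  have hswap : x.swap ≤ y.swap := Prod.swap_le_swap.mpr hxy
  have hy : y.swap + (1, 0) = (y + (0, 1)).swap := rfl
  refine ⟨⟨incI_add_e1_le w hxy, incJ_le_incJ_add_e1 w hxy⟩, ?_, ?_⟩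
  · simpa only [hy, incJ_comp_swap] using incJ_le_incJ_add_e1 (w ∘ Prod.swap) hswap
  · simpa only [hy, incI_comp_swap] using incI_add_e1_le (w ∘ Prod.swap) hswap
end
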